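/- arXiv:2202.11978 — 4 statements merged into one kernel-verified Lean document; each statement's English description precedes it below -/
import Mathlib

section
/- For the model-averaging risk R_n(w) = μᵀ(P(w) − I)²μ + tr(P(w)²Ω) with P(w) = Σ_{m=1}^{M} w_m P_m over nested projections, writing γ_m = Σ_{j=m}^{M} w_j, one has the decomposition R_n(w) = Σ_{m=1}^{M} [γ_m²(b_m + v_m) − 2γ_m b_m + b_m] + μᵀ(I − P_M)μ, where b_m = μᵀ(P_m − P_{m−1})μ and v_m = tr{(P_m − P_{m−1})Ω}. -/
/-!
Nestedness `P i * P j = P (min i j)` makes the increments `Δ m = P m - P (m - 1)`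
orthogonal idempotents, and Abel summation writes `P(w) = ∑ m, γ m • Δ m`.
Hence `P(w)² = ∑ m, γ m ² • Δ m` and, since `1 = ∑ m, Δ m + (1 - P M)`, also
`(P(w) - 1)² = ∑ m, (γ m - 1)² • Δ m + (1 - P M)`. Both terms of the risk are linear
in these matrices, which gives the decomposition term by term.
-/

open Matrix

open Finset

section Nested

variable {R A : Type*}

theorem sum_Icc_one_sub_pred [AddCommGroup A] (P : ℕ → A) (j : ℕ) :
    ∑ m ∈ Icc 1 j, (P m - P (m - 1)) = P j - P 0 := by
  induction j with
  | zero => simp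
  | succ k ih =>
    rw [sum_Icc_succ_top (by omega), ih, Nat.add_sub_cancel]
    abel

theorem sum_Icc_smul_eq_sum_Icc_tail_smul_sub_pred [Semiring R] [AddCommGroup A] [Module R A]
    (w : ℕ → R) {P : ℕ → A} (hP0 : P 0 = 0) (M : ℕ) :
    ∑ m ∈ Icc 1 M, w m • P m
      = ∑ m ∈ Icc 1 M, (∑ j ∈ Icc m M, w j) • (P m - P (m - 1)) := by
  simp_rw [sum_smul]
  rw [sum_comm' (t' := Icc 1 M) (s' := fun j => Icc 1 j) (by intros; simp only [mem_Icc]; omega)]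
  refine sum_congr rfl fun j _ => ?_
  rw [← smul_sum, sum_Icc_one_sub_pred, hP0, sub_zero]

theorem sub_pred_mul_sub_pred_of_mul_eq_min [Ring A] {P : ℕ → A} {M : ℕ}
    (hmin : ∀ i j, i ≤ M → j ≤ M → P i * P j = P (min i j)) {m k : ℕ}
    (hm : m ∈ Icc 1 M) (hk : k ∈ Icc 1 M) :
    (P m - P (m - 1)) * (P k - P (k - 1)) = if m = k then P m - P (m - 1) else 0 := by
  rw [mem_Icc] at hm hk
  simp only [sub_mul, mul_sub, hmin _ _ (by omega : m ≤ M) (by omega : k ≤ M),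
    hmin _ _ (by omega : m ≤ M) (by omega : k - 1 ≤ M),
    hmin _ _ (by omega : m - 1 ≤ M) (by omega : k ≤ M),
    hmin _ _ (by omega : m - 1 ≤ M) (by omega : k - 1 ≤ M)]
  rcases lt_trichotomy m k with h | rfl | h
  · rw [if_neg h.ne, min_eq_left h.le, min_eq_left (by omega : m ≤ k - 1),
      min_eq_left (by omega : m - 1 ≤ k), min_eq_left (by omega : m - 1 ≤ k - 1)]
    abel
  · simp
  · rw [if_neg h.ne', min_eq_right h.le, min_eq_right (by omega : k - 1 ≤ m),
      min_eq_right (by omega : k ≤ m - 1), min_eq_right (by omega : k - 1 ≤ m - 1)]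
    abel

theorem sum_smul_mul_sum_smul_of_mul_eq_ite [CommSemiring R] [Semiring A] [Algebra R A]
    {ι : Type*} [DecidableEq ι] {s : Finset ι} {e : ι → A}
    (he : ∀ i ∈ s, ∀ j ∈ s, e i * e j = if i = j then e i else 0) (c d : ι → R) :
    (∑ i ∈ s, c i • e i) * (∑ i ∈ s, d i • e i) = ∑ i ∈ s, (c i * d i) • e i := by
  rw [sum_mul_sum]
  refine sum_congr rfl fun i hi => ?_
  rw [sum_eq_single_of_mem i hi fun j hj hji => ?_]
  · rw [smul_mul_smul_comm, he i hi i hi, if_pos rfl]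
  · rw [smul_mul_smul_comm, he i hi j hj, if_neg hji.symm, smul_zero]

variable [CommRing R] [Ring A] [Algebra R A] {P : ℕ → A} {M : ℕ}

theorem sum_smul_mul_self_of_mul_eq_min (hP0 : P 0 = 0)
    (hmin : ∀ i j, i ≤ M → j ≤ M → P i * P j = P (min i j)) (w : ℕ → R) :
    (∑ m ∈ Icc 1 M, w m • P m) * (∑ m ∈ Icc 1 M, w m • P m)
      = ∑ m ∈ Icc 1 M, (∑ j ∈ Icc m M, w j) ^ 2 • (P m - P (m - 1)) := by
  simp_rw [sum_Icc_smul_eq_sum_Icc_tail_smul_sub_pred w hP0, sq]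
  exact sum_smul_mul_sum_smul_of_mul_eq_ite
    (fun _ hm _ hk => sub_pred_mul_sub_pred_of_mul_eq_min hmin hm hk) _ _

theorem sum_smul_sub_one_mul_self_of_mul_eq_min (hP0 : P 0 = 0)
    (hmin : ∀ i j, i ≤ M → j ≤ M → P i * P j = P (min i j)) (w : ℕ → R) :
    (∑ m ∈ Icc 1 M, w m • P m - 1) * (∑ m ∈ Icc 1 M, w m • P m - 1)
      = ∑ m ∈ Icc 1 M, (∑ j ∈ Icc m M, w j - 1) ^ 2 • (P m - P (m - 1)) + (1 - P M) := by
  have hPM : P M = ∑ m ∈ Icc 1 M, (P m - P (m - 1)) := by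
    rw [sum_Icc_one_sub_pred, hP0, sub_zero]
  calc _ = (∑ m ∈ Icc 1 M, w m • P m) * (∑ m ∈ Icc 1 M, w m • P m)
        - (2 : R) • ∑ m ∈ Icc 1 M, w m • P m + P M + (1 - P M) := by
        rw [two_smul]; noncomm_ring
    _ = _ := by
      rw [sum_smul_mul_self_of_mul_eq_min hP0 hmin,
        sum_Icc_smul_eq_sum_Icc_tail_smul_sub_pred w hP0, hPM, smul_sum,
        ← sum_sub_distrib, ← sum_add_distrib]
      congr 1
      refine sum_congr rfl fun m _ => ?_
      module

end Nested

theorem ma_risk_decomposition_general (n M : ℕ)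
    (P : ℕ → Matrix (Fin n) (Fin n) ℝ)
    (Ωm : Matrix (Fin n) (Fin n) ℝ) (μ : Fin n → ℝ) (w : ℕ → ℝ)
    (hP0 : P 0 = 0)
    (hmin : ∀ i j, i ≤ M → j ≤ M → P i * P j = P (min i j)) :
    μ ⬝ᵥ ((((∑ m ∈ Finset.Icc 1 M, w m • P m) - 1) *
          ((∑ m ∈ Finset.Icc 1 M, w m • P m) - 1)) *ᵥ μ)
      + ((∑ m ∈ Finset.Icc 1 M, w m • P m) *
          (∑ m ∈ Finset.Icc 1 M, w m • P m) * Ωm).trace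
    = (∑ m ∈ Finset.Icc 1 M,
        ((∑ j ∈ Finset.Icc m M, w j) ^ 2 *
            (μ ⬝ᵥ ((P m - P (m - 1)) *ᵥ μ) + ((P m - P (m - 1)) * Ωm).trace)
          - 2 * (∑ j ∈ Finset.Icc m M, w j) * (μ ⬝ᵥ ((P m - P (m - 1)) *ᵥ μ))
          + μ ⬝ᵥ ((P m - P (m - 1)) *ᵥ μ)))
      + μ ⬝ᵥ ((1 - P M) *ᵥ μ) := by
  rw [sum_smul_sub_one_mul_self_of_mul_eq_min hP0 hmin, sum_smul_mul_self_of_mul_eq_min hP0 hmin]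
  simp only [add_mulVec, dotProduct_add, sum_mulVec, dotProduct_sum, smul_mulVec, dotProduct_smul,
    sum_mul, trace_sum, smul_mul, trace_smul, smul_eq_mul]
  rw [add_right_comm, ← sum_add_distrib]
  congr 1
  exact sum_congr rfl fun m _ => by ring

/-- Decomposition of the model-averaging risk over nested projections:
`R(w) = Σ_m [γ_m²(b_m+v_m) − 2γ_m b_m + b_m] + μᵀ(I−P_M)μ`. -/
theorem ma_risk_decomposition (n M : ℕ) (hM : 1 ≤ M)
    (P : ℕ → Matrix (Fin n) (Fin n) ℝ)
    (Ωm : Matrix (Fin n) (Fin n) ℝ) (μ : Fin n → ℝ) (w : ℕ → ℝ)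
    (hP0 : P 0 = 0)
    (hmin : ∀ i j, i ≤ M → j ≤ M → P i * P j = P (min i j))
    (hsymm : ∀ i, i ≤ M → (P i)ᵀ = P i) :
    μ ⬝ᵥ ((((∑ m ∈ Finset.Icc 1 M, w m • P m) - 1) *
          ((∑ m ∈ Finset.Icc 1 M, w m • P m) - 1)) *ᵥ μ)
      + ((∑ m ∈ Finset.Icc 1 M, w m • P m) *
          (∑ m ∈ Finset.Icc 1 M, w m • P m) * Ωm).trace
    = (∑ m ∈ Finset.Icc 1 M,
        ((∑ j ∈ Finset.Icc m M, w j) ^ 2 *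
            (μ ⬝ᵥ ((P m - P (m - 1)) *ᵥ μ) + ((P m - P (m - 1)) * Ωm).trace)
          - 2 * (∑ j ∈ Finset.Icc m M, w j) * (μ ⬝ᵥ ((P m - P (m - 1)) *ᵥ μ))
          + μ ⬝ᵥ ((P m - P (m - 1)) *ᵥ μ)))
      + μ ⬝ᵥ ((1 - P M) *ᵥ μ) :=
  ma_risk_decomposition_general n M P Ωm μ w hP0 hmin
end

section
/- Under the assumptions that the sequence θ_{n,m} = b_m/(n v_m) is non-increasing in m and R_n(m) is first decreasing then increasing (unimodal) in m, the optimal simplex-weighted model-averaging risk R_n(w*_n) satisfies R_n(w*_n) ≥ (1/2) R_n(m*_n), where m*_n minimizes R_n(m) over m ∈ {1,...,M}. Consequently R_n(m*_n) and R_n(w*_n) have the same order: R_n(w*_n) ≤ R_n(m*_n) ≤ 2 R_n(w*_n). -/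
/-!
Write `Dₖ = Pₖ - Pₖ₋₁`. Nestedness makes the `Dₖ` orthogonal idempotents, and summation by
parts turns the averaging matrix `∑ wᵢ Pᵢ` into `∑ cₖ Dₖ` with tail weights `cₖ = ∑_{i ≥ k} wᵢ`,
so `c₁ = 1` on the simplex. Hence both risks split over the blocks:
`R(w) = R₀ + ∑ₖ ((1 - cₖ)² bₖ + cₖ² vₖ)` and `R(m) = R₀ + ∑_{k ≤ m} vₖ + ∑_{k > m} bₖ`, where
`R₀ = μᵀ(1 - P_M)μ ≥ 0`. Since `bₖ / vₖ = n θₖ` is non-increasing, the block `k = 1` together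
with the blocks where `vₖ ≤ bₖ` forms an initial segment `{1, …, m}`, so
`R(m) = R₀ + v₁ + ∑_{k ≥ 2} min(bₖ, vₖ)`. Finally
`min(b, v) ≤ 2((1 - c)² b + c² v)` because `(1 - c)² + c² ≥ 1/2`, and the block `k = 1`
contributes `v₁` to both risks. The bound `R(w*) ≤ R(m*)` holds because the vertex `w = eₘ` of
the simplex gives `R(eₘ) = R(m)`.
-/

open Matrix Finset

section NestedIdempotents

variable {R : Type*} {M : ℕ} {P : ℕ → R}

theorem sum_Icc_sub_pred [AddCommGroup R] (hP0 : P 0 = 0) (m : ℕ) :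
    ∑ k ∈ Icc 1 m, (P k - P (k - 1)) = P m := by
  induction m with
  | zero => simp [hP0]
  | succ m ih => rw [sum_Icc_succ_top (by omega), ih, Nat.add_sub_cancel, add_sub_cancel]

theorem sum_smul_eq_sum_tail_smul_sub_pred {𝕜 : Type*} [Semiring 𝕜] [AddCommGroup R]
    [Module 𝕜 R] (hP0 : P 0 = 0) (w : ℕ → 𝕜) :
    ∑ i ∈ Icc 1 M, w i • P i = ∑ k ∈ Icc 1 M, (∑ i ∈ Icc k M, w i) • (P k - P (k - 1)) := by
  calc ∑ i ∈ Icc 1 M, w i • P i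
      = ∑ i ∈ Icc 1 M, ∑ k ∈ Icc 1 i, w i • (P k - P (k - 1)) := by
        simp only [← smul_sum, sum_Icc_sub_pred hP0]
    _ = ∑ k ∈ Icc 1 M, ∑ i ∈ Icc k M, w i • (P k - P (k - 1)) :=
        sum_comm' fun i k => by simp only [mem_Icc]; omega
    _ = _ := by simp only [sum_smul]

theorem sub_pred_mul_sub_pred [Ring R] (hmin : ∀ i j, i ≤ M → j ≤ M → P i * P j = P (min i j))
    {k l : ℕ} (hk : k ∈ Icc 1 M) (hl : l ∈ Icc 1 M) :
    (P k - P (k - 1)) * (P l - P (l - 1)) = if k = l then P k - P (k - 1) else 0 := by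
  rw [mem_Icc] at hk hl
  rw [mul_sub, sub_mul, sub_mul, hmin _ _ (by omega) (by omega), hmin _ _ (by omega) (by omega),
    hmin _ _ (by omega) (by omega), hmin _ _ (by omega) (by omega)]
  rcases lt_trichotomy k l with h | rfl | h
  · rw [if_neg h.ne, min_eq_left h.le, min_eq_left (by omega : k ≤ l - 1),
      min_eq_left (by omega : k - 1 ≤ l), min_eq_left (by omega : k - 1 ≤ l - 1)]
    abel
  · simp
  · rw [if_neg h.ne', min_eq_right h.le, min_eq_right (by omega : l - 1 ≤ k),
      min_eq_right (by omega : l ≤ k - 1), min_eq_right (by omega : l - 1 ≤ k - 1)]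
    abel

end NestedIdempotents

section OrthogonalIdempotents

variable {ι 𝕜 R : Type*} [DecidableEq ι] {s : Finset ι} {D : ι → R}

theorem sum_smul_mul_sum_smul_of_orthogonal [CommSemiring 𝕜] [Semiring R] [Algebra 𝕜 R]
    (hD : ∀ k ∈ s, ∀ l ∈ s, D k * D l = if k = l then D k else 0) (a a' : ι → 𝕜) :
    (∑ k ∈ s, a k • D k) * (∑ k ∈ s, a' k • D k) = ∑ k ∈ s, (a k * a' k) • D k := by
  rw [sum_mul_sum]
  refine sum_congr rfl fun k hk => ?_
  rw [sum_congr rfl fun l hl => by rw [smul_mul_smul_comm, hD k hk l hl, smul_ite, smul_zero],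
    sum_ite_eq s k, if_pos hk]

theorem sum_smul_sub_one_mul_self_of_orthogonal [CommRing 𝕜] [Ring R] [Algebra 𝕜 R]
    (hD : ∀ k ∈ s, ∀ l ∈ s, D k * D l = if k = l then D k else 0) (c : ι → 𝕜) :
    (∑ k ∈ s, c k • D k - 1) * (∑ k ∈ s, c k • D k - 1)
      = (1 - ∑ k ∈ s, D k) + ∑ k ∈ s, (1 - c k) ^ 2 • D k := by
  have hexp : ∀ k, (1 - c k) ^ 2 • D k = (c k * c k) • D k - c k • D k - c k • D k + D k :=
    fun k => by module
  rw [sub_one_mul, mul_sub_one, sum_smul_mul_sum_smul_of_orthogonal hD,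
    sum_congr rfl fun k _ => hexp k]
  simp only [sum_add_distrib, sum_sub_distrib]
  abel

end OrthogonalIdempotents

theorem Matrix.IsHermitian.posSemidef_of_isIdempotentElem {n R : Type*} [Fintype n] [CommRing R]
    [PartialOrder R] [StarRing R] [StarOrderedRing R] {N : Matrix n n R} (hH : N.IsHermitian)
    (hN : IsIdempotentElem N) : N.PosSemidef := by
  have hN' : N = Nᴴ * N := by rw [hH.eq, hN.eq]
  rw [hN']
  exact posSemidef_conjTranspose_mul_self N

section NestedProjections

variable {n : Type*} [Fintype n] {M : ℕ} {P : ℕ → Matrix n n ℝ}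

theorem dotProduct_mulVec_nonneg_of_isIdempotentElem {N : Matrix n n ℝ} (hN : IsIdempotentElem N)
    (hsymm : Nᵀ = N) (μ : n → ℝ) : 0 ≤ μ ⬝ᵥ (N *ᵥ μ) := by
  have hH : N.IsHermitian := by rw [IsHermitian, conjTranspose_eq_transpose_of_trivial, hsymm]
  simpa using (hH.posSemidef_of_isIdempotentElem hN).dotProduct_mulVec_nonneg μ

variable [DecidableEq n]

theorem dotProduct_one_sub_mulVec_nonneg
    (hmin : ∀ i j, i ≤ M → j ≤ M → P i * P j = P (min i j)) (hsymm : ∀ i, i ≤ M → (P i)ᵀ = P i)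
    (μ : n → ℝ) : 0 ≤ μ ⬝ᵥ ((1 - P M) *ᵥ μ) := by
  refine dotProduct_mulVec_nonneg_of_isIdempotentElem (IsIdempotentElem.one_sub ?_) ?_ μ
  · rw [IsIdempotentElem, hmin M M le_rfl le_rfl, min_self]
  · rw [transpose_sub, transpose_one, hsymm M le_rfl]

theorem dotProduct_sub_pred_mulVec_nonneg
    (hmin : ∀ i j, i ≤ M → j ≤ M → P i * P j = P (min i j)) (hsymm : ∀ i, i ≤ M → (P i)ᵀ = P i)
    {k : ℕ} (hk : k ∈ Icc 1 M) (μ : n → ℝ) : 0 ≤ μ ⬝ᵥ ((P k - P (k - 1)) *ᵥ μ) := by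
  have hkM := (mem_Icc.1 hk).2
  refine dotProduct_mulVec_nonneg_of_isIdempotentElem ?_ ?_ μ
  · rw [IsIdempotentElem, sub_pred_mul_sub_pred hmin hk hk, if_pos rfl]
  · rw [transpose_sub, hsymm k hkM, hsymm (k - 1) (by omega)]

/-- The quadratic risk `E‖A y - μ‖²` of the linear estimator `A y`, for `y` with mean `μ` and
covariance `Ω`, when `A` is symmetric. -/
noncomputable def linearRisk (μ : n → ℝ) (Ω A : Matrix n n ℝ) : ℝ :=
  μ ⬝ᵥ (((A - 1) * (A - 1)) *ᵥ μ) + (A * A * Ω).trace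

theorem linearRisk_of_isIdempotentElem (μ : n → ℝ) (Ω : Matrix n n ℝ) {A : Matrix n n ℝ}
    (hA : IsIdempotentElem A) : linearRisk μ Ω A = μ ⬝ᵥ ((1 - A) *ᵥ μ) + (A * Ω).trace := by
  rw [linearRisk, ← neg_sub 1 A, neg_mul_neg, hA.one_sub.eq, hA.eq]

theorem linearRisk_sum_smul (hP0 : P 0 = 0)
    (hmin : ∀ i j, i ≤ M → j ≤ M → P i * P j = P (min i j)) (μ : n → ℝ) (Ω : Matrix n n ℝ)
    (w : ℕ → ℝ) :
    linearRisk μ Ω (∑ i ∈ Icc 1 M, w i • P i)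
      = μ ⬝ᵥ ((1 - P M) *ᵥ μ) + ∑ k ∈ Icc 1 M,
          ((1 - ∑ i ∈ Icc k M, w i) ^ 2 * μ ⬝ᵥ ((P k - P (k - 1)) *ᵥ μ)
            + (∑ i ∈ Icc k M, w i) ^ 2 * ((P k - P (k - 1)) * Ω).trace) := by
  have hD : ∀ k ∈ Icc 1 M, ∀ l ∈ Icc 1 M, (P k - P (k - 1)) * (P l - P (l - 1))
      = if k = l then P k - P (k - 1) else 0 := fun k hk l hl => sub_pred_mul_sub_pred hmin hk hl
  rw [linearRisk, sum_smul_eq_sum_tail_smul_sub_pred hP0,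
    sum_smul_sub_one_mul_self_of_orthogonal hD, sum_smul_mul_sum_smul_of_orthogonal hD,
    sum_Icc_sub_pred hP0]
  simp only [add_mulVec, sum_mulVec, smul_mulVec, dotProduct_add, dotProduct_sum, dotProduct_smul,
    sum_mul, smul_mul, trace_sum, trace_smul, smul_eq_mul, sum_add_distrib, sq, add_assoc]

theorem sum_pi_single_smul {𝕜 R : Type*} [Semiring 𝕜] [AddCommMonoid R] [Module 𝕜 R]
    {s : Finset ℕ} {m : ℕ} (hm : m ∈ s) (P : ℕ → R) :
    ∑ i ∈ s, (Pi.single m 1 : ℕ → 𝕜) i • P i = P m := by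
  simp [Pi.single_apply, hm]

theorem linearRisk_nested (hP0 : P 0 = 0)
    (hmin : ∀ i j, i ≤ M → j ≤ M → P i * P j = P (min i j)) (μ : n → ℝ) (Ω : Matrix n n ℝ)
    {m : ℕ} (hm : m ∈ Icc 1 M) :
    linearRisk μ Ω (P m) = μ ⬝ᵥ ((1 - P M) *ᵥ μ) + ∑ k ∈ Icc 1 M,
      if k ≤ m then ((P k - P (k - 1)) * Ω).trace else μ ⬝ᵥ ((P k - P (k - 1)) *ᵥ μ) := by
  rw [← sum_pi_single_smul (𝕜 := ℝ) hm P, linearRisk_sum_smul hP0 hmin]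
  refine congrArg _ (sum_congr rfl fun k hk => ?_)
  have htail : ∑ i ∈ Icc k M, (Pi.single m 1 : ℕ → ℝ) i = if k ≤ m then 1 else 0 := by
    simp [Pi.single_apply, (mem_Icc.1 hm).2]
  split_ifs at htail ⊢ <;> simp [htail]

end NestedProjections

theorem min_le_two_mul_sq_mul_add_sq_mul {b v : ℝ} (hb : 0 ≤ b) (hv : 0 ≤ v) (c : ℝ) :
    min b v ≤ 2 * ((1 - c) ^ 2 * b + c ^ 2 * v) := by
  have hmb := min_le_left b v
  have hmv := min_le_right b v
  nlinarith [sq_nonneg (2 * c - 1), mul_le_mul_of_nonneg_left hmb (sq_nonneg (1 - c)),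
    mul_le_mul_of_nonneg_left hmv (sq_nonneg c), le_min hb hv]

theorem exists_forall_le_iff_of_downward_closed {M : ℕ} (p : ℕ → Prop) [DecidablePred p]
    (hM : 1 ≤ M) (h1 : p 1) (hdown : ∀ i j, 1 ≤ i → i ≤ j → j ≤ M → p j → p i) :
    ∃ m ∈ Icc 1 M, ∀ k ∈ Icc 1 M, k ≤ m ↔ p k := by
  have hne : ((Icc 1 M).filter p).Nonempty := ⟨1, mem_filter.2 ⟨mem_Icc.2 ⟨le_rfl, hM⟩, h1⟩⟩
  obtain ⟨hmS, hpm⟩ := mem_filter.1 (max'_mem _ hne)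
  refine ⟨_, hmS, fun k hk => ⟨fun hkm => ?_, fun hpk => le_max' _ k (mem_filter.2 ⟨hk, hpk⟩)⟩⟩
  exact hdown k _ (mem_Icc.1 hk).1 hkm (mem_Icc.1 hmS).2 hpm

theorem antitoneOn_div_of_succ_le {M : ℕ} {a : ℝ} (ha : 0 < a) {b v θ : ℕ → ℝ}
    (hθ : ∀ k, θ k = b k / (a * v k)) (hθmono : ∀ k ∈ Icc 1 (M - 1), θ (k + 1) ≤ θ k) :
    AntitoneOn (fun k => b k / v k) (Set.Icc 1 M) := by
  have hbv : ∀ k, b k / v k = a * θ k := fun k => by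
    rw [hθ, mul_div_assoc', mul_div_mul_left _ _ ha.ne']
  refine antitoneOn_of_add_one_le Set.ordConnected_Icc fun k _ hk hk1 => ?_
  simp only [hbv]
  refine mul_le_mul_of_nonneg_left (hθmono k ?_) ha.le
  simp only [Set.mem_Icc, mem_Icc] at hk hk1 ⊢
  omega

theorem exists_sum_ite_le_two_mul_sum {M : ℕ} {b v c : ℕ → ℝ} (hM : 1 ≤ M)
    (hb : ∀ k ∈ Icc 1 M, 0 ≤ b k) (hv : ∀ k ∈ Icc 1 M, 0 < v k)
    (hratio : AntitoneOn (fun k => b k / v k) (Set.Icc 1 M)) (hc : c 1 = 1) :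
    ∃ m ∈ Icc 1 M, ∑ k ∈ Icc 1 M, (if k ≤ m then v k else b k)
      ≤ 2 * ∑ k ∈ Icc 1 M, ((1 - c k) ^ 2 * b k + c k ^ 2 * v k) := by
  have hdown : ∀ i j, 1 ≤ i → i ≤ j → j ≤ M → (j = 1 ∨ v j ≤ b j) → (i = 1 ∨ v i ≤ b i) := by
    rintro i j hi hij hjM (rfl | hvb)
    · exact Or.inl (by omega)
    · right
      have hjS : j ∈ Icc 1 M := mem_Icc.2 ⟨hi.trans hij, hjM⟩
      have hiS : i ∈ Icc 1 M := mem_Icc.2 ⟨hi, hij.trans hjM⟩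
      have hj1 : 1 ≤ b j / v j := (one_le_div (hv j hjS)).2 hvb
      have hi1 : 1 ≤ b i / v i :=
        hj1.trans (hratio (Set.mem_Icc.2 (mem_Icc.1 hiS)) (Set.mem_Icc.2 (mem_Icc.1 hjS)) hij)
      exact (one_le_div (hv i hiS)).1 hi1
  obtain ⟨m, hm, hiff⟩ := exists_forall_le_iff_of_downward_closed _ hM (Or.inl rfl) hdown
  refine ⟨m, hm, ?_⟩
  rw [mul_sum]
  refine sum_le_sum fun k hk => ?_
  rcases eq_or_ne k 1 with rfl | hk1
  · rw [if_pos (mem_Icc.1 hm).1, hc]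
    nlinarith [hv 1 hk]
  · have hmin : (if k ≤ m then v k else b k) = min (b k) (v k) := by
      by_cases hkm : k ≤ m
      · rw [if_pos hkm, min_eq_right (((hiff k hk).1 hkm).resolve_left hk1)]
      · rw [if_neg hkm, min_eq_left]
        by_contra hbv
        exact hkm ((hiff k hk).2 (Or.inr (not_le.1 hbv).le))
    rw [hmin]
    exact min_le_two_mul_sq_mul_add_sq_mul (hb k hk) (hv k hk).le (c k)

theorem ma_vs_ms_half_general (n M : ℕ) (hn : 0 < n) (hM : 1 ≤ M)
    (P : ℕ → Matrix (Fin n) (Fin n) ℝ)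
    (Ωm : Matrix (Fin n) (Fin n) ℝ) (μ : Fin n → ℝ)
    (hP0 : P 0 = 0)
    (hmin : ∀ i j, i ≤ M → j ≤ M → P i * P j = P (min i j))
    (hsymm : ∀ i, i ≤ M → (P i)ᵀ = P i)
    (b v θ : ℕ → ℝ)
    (hb : ∀ m, b m = μ ⬝ᵥ ((P m - P (m - 1)) *ᵥ μ))
    (hvdef : ∀ m, v m = ((P m - P (m - 1)) * Ωm).trace)
    (hv : ∀ m ∈ Finset.Icc 1 M, 0 < v m)
    (hθ : ∀ m, θ m = b m / ((n : ℝ) * v m))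
    (hθmono : ∀ m ∈ Finset.Icc 1 (M - 1), θ (m + 1) ≤ θ m)
    (Rm : ℕ → ℝ)
    (hRm : ∀ m, Rm m = μ ⬝ᵥ ((1 - P m) *ᵥ μ) + (P m * Ωm).trace)
    (Rw : (ℕ → ℝ) → ℝ)
    (hRw : ∀ w : ℕ → ℝ, Rw w =
      μ ⬝ᵥ ((((∑ m ∈ Finset.Icc 1 M, w m • P m) - 1) *
          ((∑ m ∈ Finset.Icc 1 M, w m • P m) - 1)) *ᵥ μ)
        + ((∑ m ∈ Finset.Icc 1 M, w m • P m) *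
            (∑ m ∈ Finset.Icc 1 M, w m • P m) * Ωm).trace)
    (mStar : ℕ) (hmStar : mStar ∈ Finset.Icc 1 M)
    (hmStarOpt : ∀ m ∈ Finset.Icc 1 M, Rm mStar ≤ Rm m)
    (wStar : ℕ → ℝ)
    (hwStarW : (∀ m ∈ Finset.Icc 1 M, 0 ≤ wStar m) ∧
      (∑ m ∈ Finset.Icc 1 M, wStar m) = 1)
    (hwStarOpt : ∀ w : ℕ → ℝ, (∀ m ∈ Finset.Icc 1 M, 0 ≤ w m) →
      (∑ m ∈ Finset.Icc 1 M, w m) = 1 → Rw wStar ≤ Rw w) :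
    (1 / 2) * Rm mStar ≤ Rw wStar ∧ Rw wStar ≤ Rm mStar ∧
      Rm mStar ≤ 2 * Rw wStar := by
  have hRw' : ∀ w, Rw w = linearRisk μ Ωm (∑ i ∈ Icc 1 M, w i • P i) := hRw
  have hRm' : ∀ m ∈ Icc 1 M, Rm m = linearRisk μ Ωm (P m) := fun m hm => by
    rw [hRm, linearRisk_of_isIdempotentElem μ Ωm (by
      rw [IsIdempotentElem, hmin m m (mem_Icc.1 hm).2 (mem_Icc.1 hm).2, min_self])]
  have hR₀ := dotProduct_one_sub_mulVec_nonneg hmin hsymm μ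
  have hb₀ : ∀ k ∈ Icc 1 M, 0 ≤ b k := fun k hk =>
    hb k ▸ dotProduct_sub_pred_mulVec_nonneg hmin hsymm hk μ
  obtain ⟨m, hm, hsel⟩ := exists_sum_ite_le_two_mul_sum (c := fun k => ∑ i ∈ Icc k M, wStar i)
    hM hb₀ hv (antitoneOn_div_of_succ_le (Nat.cast_pos.2 hn) hθ hθmono) hwStarW.2
  have hupper : Rw wStar ≤ Rm mStar :=
    calc Rw wStar ≤ Rw (Pi.single mStar 1) :=
          hwStarOpt _ (fun i _ => by rw [Pi.single_apply]; positivity) (by simp [hmStar])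
      _ = Rm mStar := by rw [hRw', hRm' mStar hmStar, sum_pi_single_smul hmStar]
  have hlower : Rm mStar ≤ 2 * Rw wStar :=
    calc Rm mStar ≤ Rm m := hmStarOpt m hm
      _ = μ ⬝ᵥ ((1 - P M) *ᵥ μ) + ∑ k ∈ Icc 1 M, if k ≤ m then v k else b k := by
          rw [hRm' m hm, linearRisk_nested hP0 hmin μ Ωm hm]; simp only [hb, hvdef]
      _ ≤ 2 * Rw wStar := by
          rw [hRw', linearRisk_sum_smul hP0 hmin μ Ωm wStar]
          simp only [← hb, ← hvdef]
          linarith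
  exact ⟨by linarith, hupper, hlower⟩

/-- Under non-increasing grouped variable importance and unimodal selection risk,
the optimal simplex model-averaging risk is at least half the optimal model
selection risk, so the two risks have the same order. -/
theorem ma_vs_ms_half (n M : ℕ) (hn : 0 < n) (hM : 1 ≤ M)
    (P : ℕ → Matrix (Fin n) (Fin n) ℝ)
    (Ωm : Matrix (Fin n) (Fin n) ℝ) (μ : Fin n → ℝ)
    (hP0 : P 0 = 0)
    (hmin : ∀ i j, i ≤ M → j ≤ M → P i * P j = P (min i j))
    (hsymm : ∀ i, i ≤ M → (P i)ᵀ = P i)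
    (b v θ : ℕ → ℝ)
    (hb : ∀ m, b m = μ ⬝ᵥ ((P m - P (m - 1)) *ᵥ μ))
    (hvdef : ∀ m, v m = ((P m - P (m - 1)) * Ωm).trace)
    (hv : ∀ m ∈ Finset.Icc 1 M, 0 < v m)
    (hθ : ∀ m, θ m = b m / ((n : ℝ) * v m))
    (hθmono : ∀ m ∈ Finset.Icc 1 (M - 1), θ (m + 1) ≤ θ m)
    (Rm : ℕ → ℝ)
    (hRm : ∀ m, Rm m = μ ⬝ᵥ ((1 - P m) *ᵥ μ) + (P m * Ωm).trace)
    (Rw : (ℕ → ℝ) → ℝ)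
    (hRw : ∀ w : ℕ → ℝ, Rw w =
      μ ⬝ᵥ ((((∑ m ∈ Finset.Icc 1 M, w m • P m) - 1) *
          ((∑ m ∈ Finset.Icc 1 M, w m • P m) - 1)) *ᵥ μ)
        + ((∑ m ∈ Finset.Icc 1 M, w m • P m) *
            (∑ m ∈ Finset.Icc 1 M, w m • P m) * Ωm).trace)
    (huni : ∃ m0 ∈ Finset.Icc 1 M,
      (∀ i j, 1 ≤ i → i ≤ j → j ≤ m0 → Rm j ≤ Rm i) ∧
      (∀ i j, m0 ≤ i → i ≤ j → j ≤ M → Rm i ≤ Rm j))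
    (mStar : ℕ) (hmStar : mStar ∈ Finset.Icc 1 M)
    (hmStarOpt : ∀ m ∈ Finset.Icc 1 M, Rm mStar ≤ Rm m)
    (wStar : ℕ → ℝ)
    (hwStarW : (∀ m ∈ Finset.Icc 1 M, 0 ≤ wStar m) ∧
      (∑ m ∈ Finset.Icc 1 M, wStar m) = 1)
    (hwStarOpt : ∀ w : ℕ → ℝ, (∀ m ∈ Finset.Icc 1 M, 0 ≤ w m) →
      (∑ m ∈ Finset.Icc 1 M, w m) = 1 → Rw wStar ≤ Rw w) :
    (1 / 2) * Rm mStar ≤ Rw wStar ∧ Rw wStar ≤ Rm mStar ∧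
      Rm mStar ≤ 2 * Rw wStar :=
  ma_vs_ms_half_general n M hn hM P Ωm μ hP0 hmin hsymm b v θ hb hvdef hv hθ hθmono Rm hRm Rw hRw
    mStar hmStar hmStarOpt wStar hwStarW hwStarOpt
end

section
/- The gap between optimal model selection risk and optimal model averaging risk admits the exact expression Δ_n = R_n(m*) − R_n(w*) = Σ_{m=2}^{m*} [v_m − v_m b_m/(b_m + v_m)] + Σ_{m=m*+1}^{M} b_m²/(b_m + v_m) = Σ_{m=2}^{m*} v_m²/(b_m+v_m) + Σ_{m=m*+1}^{M} b_m²/(b_m+v_m), and in particular Δ_n ≥ 0. -/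
/-!
Write `b_m` and `v_m` as increments of `m ↦ μᵀ P_m μ` and `m ↦ tr(P_m Ω)`. Telescoping turns the
bias of model `m*` into `∑_{m > m*} b_m + μᵀ(I - P_M)μ` and its variance into
`tr(P_1 Ω) + ∑_{m ≤ m*} v_m`, so the gap is a sum of the per-term differences
`v_m - v_m b_m / (b_m + v_m) = v_m² / (b_m + v_m)` for `m ≤ m*` and
`b_m - v_m b_m / (b_m + v_m) = b_m² / (b_m + v_m)` for `m > m*`.
-/

open Matrix Finset

theorem Finset.sum_Icc_add_one_sub_pred {G : Type*} [AddCommGroup G] (f : ℕ → G) {a c : ℕ}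
    (h : a ≤ c) : ∑ m ∈ Icc (a + 1) c, (f m - f (m - 1)) = f c - f a := by
  induction c, h using Nat.le_induction with
  | base => simp
  | succ c hac ih =>
    rw [sum_Icc_succ_top (by omega), ih, Nat.add_sub_cancel]
    abel

section ShrinkageIdentity

variable {K : Type*} [Field K] {x y : K}

theorem sub_mul_div_add_eq_sq_div_left (h : x + y ≠ 0) :
    x - y * x / (x + y) = x ^ 2 / (x + y) := by
  field_simp
  ring

theorem sub_mul_div_add_eq_sq_div_right (h : x + y ≠ 0) :
    y - y * x / (x + y) = y ^ 2 / (x + y) := by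
  field_simp
  ring

theorem sum_add_sum_sub_sum_mul_div_add (b v : ℕ → K) {k M : ℕ} (hk : 1 ≤ k) (hkM : k ≤ M)
    (hden : ∀ m ∈ Icc 2 M, b m + v m ≠ 0) :
    ∑ m ∈ Icc 2 k, v m + ∑ m ∈ Icc (k + 1) M, b m - ∑ m ∈ Icc 2 M, v m * b m / (b m + v m)
      = ∑ m ∈ Icc 2 k, v m ^ 2 / (b m + v m) + ∑ m ∈ Icc (k + 1) M, b m ^ 2 / (b m + v m) := by
  have hlow : Icc 2 k ⊆ Icc 2 M := Icc_subset_Icc le_rfl hkM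
  have hhigh : Icc (k + 1) M ⊆ Icc 2 M := Icc_subset_Icc (by omega) le_rfl
  have hsplit : ∑ m ∈ Icc 2 M, v m * b m / (b m + v m)
      = ∑ m ∈ Icc 2 k, v m * b m / (b m + v m) + ∑ m ∈ Icc (k + 1) M, v m * b m / (b m + v m) := by
    rw [show (2 : ℕ) = 1 + 1 from rfl]
    simp only [Icc_add_one_left_eq_Ioc, sum_Ioc_consecutive _ hk hkM]
  rw [hsplit, add_sub_add_comm, ← sum_sub_distrib, ← sum_sub_distrib]
  congr 1
  · exact sum_congr rfl fun m hm => sub_mul_div_add_eq_sq_div_right (hden m (hlow hm))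
  · exact sum_congr rfl fun m hm => sub_mul_div_add_eq_sq_div_left (hden m (hhigh hm))

end ShrinkageIdentity

/-- Exact expression for the gap between optimal model selection risk and
optimal model averaging risk; in particular the gap is nonnegative. -/
theorem ms_ma_gap (n M mStar : ℕ) (h1 : 1 ≤ mStar) (hM : mStar ≤ M)
    (P : ℕ → Matrix (Fin n) (Fin n) ℝ)
    (Ωm : Matrix (Fin n) (Fin n) ℝ) (μ : Fin n → ℝ)
    (b v : ℕ → ℝ)
    (hb : ∀ m, b m = μ ⬝ᵥ ((P m - P (m - 1)) *ᵥ μ))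
    (hvdef : ∀ m, v m = ((P m - P (m - 1)) * Ωm).trace)
    (hbpos : ∀ m ∈ Finset.Icc 2 M, 0 ≤ b m)
    (hvpos : ∀ m ∈ Finset.Icc 2 M, 0 < v m) :
    ((μ ⬝ᵥ ((1 - P mStar) *ᵥ μ) + (P mStar * Ωm).trace)
        - ((P 1 * Ωm).trace + (∑ m ∈ Finset.Icc 2 M, v m * b m / (b m + v m))
            + μ ⬝ᵥ ((1 - P M) *ᵥ μ))
      = (∑ m ∈ Finset.Icc 2 mStar, v m ^ 2 / (b m + v m))
        + (∑ m ∈ Finset.Icc (mStar + 1) M, b m ^ 2 / (b m + v m)))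
    ∧ 0 ≤ (μ ⬝ᵥ ((1 - P mStar) *ᵥ μ) + (P mStar * Ωm).trace)
        - ((P 1 * Ωm).trace + (∑ m ∈ Finset.Icc 2 M, v m * b m / (b m + v m))
            + μ ⬝ᵥ ((1 - P M) *ᵥ μ)) := by
  have hden : ∀ m ∈ Icc 2 M, 0 < b m + v m := fun m hm =>
    add_pos_of_nonneg_of_pos (hbpos m hm) (hvpos m hm)
  have hbias : ∑ m ∈ Icc (mStar + 1) M, b m
      = μ ⬝ᵥ ((1 - P mStar) *ᵥ μ) - μ ⬝ᵥ ((1 - P M) *ᵥ μ) := by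
    simp only [hb, sub_mulVec, dotProduct_sub]
    rw [sum_Icc_add_one_sub_pred (fun m => μ ⬝ᵥ (P m *ᵥ μ)) hM]
    ring
  have hvar : ∑ m ∈ Icc 2 mStar, v m = (P mStar * Ωm).trace - (P 1 * Ωm).trace := by
    simp only [hvdef, sub_mul, trace_sub]
    exact sum_Icc_add_one_sub_pred (fun m => (P m * Ωm).trace) h1
  have hgap := sum_add_sum_sub_sum_mul_div_add b v h1 hM fun m hm => (hden m hm).ne'
  have hnonneg : 0 ≤ ∑ m ∈ Icc 2 mStar, v m ^ 2 / (b m + v m)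
      + ∑ m ∈ Icc (mStar + 1) M, b m ^ 2 / (b m + v m) :=
    add_nonneg
      (sum_nonneg fun m hm => div_nonneg (sq_nonneg _) (hden m (Icc_subset_Icc le_rfl hM hm)).le)
      (sum_nonneg fun m hm =>
        div_nonneg (sq_nonneg _) (hden m (Icc_subset_Icc (by omega) le_rfl hm)).le)
  exact ⟨by linarith, by linarith⟩
end

section
/- Removing the sum-to-one constraint from the simplex reduces the optimal model averaging risk by exactly R_n(w*) − R_n(w̃*) = (tr(P_1Ω))²/(μᵀP_1μ + tr(P_1Ω)), which is at most tr(P_1Ω). In particular, if tr(P_1Ω) < c2·ν_1 for a constant c2 and fixed rank ν_1, then this gap is bounded by a constant independent of n. -/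
open Matrix

/-! The two optimal risks differ only in their first term: the simplex forces the weight
pattern that costs `v₁ = tr(P₁Ω)`, the hypercube attains `v₁b₁/(b₁+v₁)`, and
`v₁ - v₁b₁/(b₁+v₁) = v₁²/(b₁+v₁) ≤ v₁` because `b₁ ≥ 0`. -/

theorem Finset.sum_Icc_eq_add_sum_Icc_succ {α : Type*} [AddCommMonoid α] (f : ℕ → α)
    {a b : ℕ} (hab : a ≤ b) :
    ∑ m ∈ Finset.Icc a b, f m = f a + ∑ m ∈ Finset.Icc (a + 1) b, f m := by
  rw [Finset.Icc_add_one_left_eq_Ioc, Finset.add_sum_Ioc_eq_sum_Icc hab]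

lemma sub_mul_div_add_eq_sq_div {b v : ℝ} (h : b + v ≠ 0) :
    v - v * b / (b + v) = v ^ 2 / (b + v) := by
  field_simp
  ring

lemma sq_div_add_le_self {b v : ℝ} (hb : 0 ≤ b) (hv : 0 ≤ v) : v ^ 2 / (b + v) ≤ v :=
  div_le_of_le_mul₀ (add_nonneg hb hv) hv (by nlinarith)

/-- Removing the sum-to-one constraint reduces the optimal model-averaging risk
by exactly `(tr(P₁Ω))²/(μᵀP₁μ + tr(P₁Ω))`, which is at most `tr(P₁Ω)`; if
`tr(P₁Ω) < c₂·ν₁` the gap is bounded by this constant. -/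
theorem simplex_vs_hypercube_gap (n M : ℕ) (hM : 1 ≤ M)
    (P : ℕ → Matrix (Fin n) (Fin n) ℝ)
    (Ωm : Matrix (Fin n) (Fin n) ℝ) (μ : Fin n → ℝ)
    (b v : ℕ → ℝ)
    (hb : ∀ m, b m = μ ⬝ᵥ ((P m - P (m - 1)) *ᵥ μ))
    (hvdef : ∀ m, v m = ((P m - P (m - 1)) * Ωm).trace)
    (hP0 : P 0 = 0)
    (hb1 : 0 ≤ b 1) (hv1 : 0 < v 1)
    (c2 : ℝ) (ν1 : ℕ) (htr : (P 1 * Ωm).trace < c2 * ν1) :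
    (((P 1 * Ωm).trace + (∑ m ∈ Finset.Icc 2 M, v m * b m / (b m + v m))
          + μ ⬝ᵥ ((1 - P M) *ᵥ μ))
        - ((∑ m ∈ Finset.Icc 1 M, v m * b m / (b m + v m))
          + μ ⬝ᵥ ((1 - P M) *ᵥ μ))
      = ((P 1 * Ωm).trace) ^ 2 / (μ ⬝ᵥ (P 1 *ᵥ μ) + (P 1 * Ωm).trace))
    ∧ ((P 1 * Ωm).trace) ^ 2 / (μ ⬝ᵥ (P 1 *ᵥ μ) + (P 1 * Ωm).trace)
        ≤ (P 1 * Ωm).trace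
    ∧ ((P 1 * Ωm).trace) ^ 2 / (μ ⬝ᵥ (P 1 *ᵥ μ) + (P 1 * Ωm).trace)
        < c2 * ν1 := by
  have hv1_eq : v 1 = (P 1 * Ωm).trace := by simp [hvdef, hP0]
  have hb1_eq : b 1 = μ ⬝ᵥ (P 1 *ᵥ μ) := by simp [hb, hP0]
  have hgap_le := sq_div_add_le_self hb1 hv1.le
  rw [hv1_eq, hb1_eq] at hgap_le
  refine ⟨?_, hgap_le, hgap_le.trans_lt htr⟩
  rw [Finset.sum_Icc_eq_add_sum_Icc_succ _ hM, ← hv1_eq, ← hb1_eq,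
    ← sub_mul_div_add_eq_sq_div (by linarith)]
  ring
end
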